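/- arXiv:1712.00892 — 3 statements merged into one kernel-verified Lean document; each statement's English description precedes it below -/
import Mathlib

section
/- With the Hoeffding decomposition, the conditional second moment of the nonlinear part satisfies E[v̄_{(ij)}² | w_i] = 1/3 and E[v̄_{(ij)}² | w_j] = 1/3 almost surely. -/
/-!
Conditionally on `w_i = x`, independence turns the conditional expectation into the integral of
`v̄²` in `y` against the common law `ν` of the `w`'s. As `F` is continuous, `F(w_j)` is uniform on
`[0, 1]` (probability integral transform); in particular `F y ≠ F x` for `ν`-a.e. `y`, and then
`sign (x - y) = sign (F x - F y)` by monotonicity, so that `v̄² = (1 - 2 |F x - F y|)²`. Hence the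
conditional second moment is `∫₀¹ (1 - 2 |u - t|)² dt = 1/3` for every `u = F x ∈ [0, 1]`.
Conditioning on `w_j` is the same computation, since `v̄²` is symmetric in `(w_i, w_j)`.
-/

open MeasureTheory ProbabilityTheory Set Filter Topology

lemma integral_one_sub_two_mul_sq (a : ℝ) :
    ∫ s in (0:ℝ)..a, (1 - 2 * s) ^ 2 = (1 - (1 - 2 * a) ^ 3) / 6 := by
  rw [intervalIntegral.integral_comp_sub_mul (fun s => s ^ 2) two_ne_zero, integral_pow]
  ring

lemma integral_Icc_one_sub_two_mul_abs_sub_sq {u : ℝ} (hu : u ∈ Icc (0:ℝ) 1) :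
    ∫ t in Icc (0:ℝ) 1, (1 - 2 * |u - t|) ^ 2 = 1 / 3 := by
  have hcont : Continuous fun t : ℝ => (1 - 2 * |u - t|) ^ 2 := by fun_prop
  have hleft : ∫ t in (0:ℝ)..u, (1 - 2 * |u - t|) ^ 2 = ∫ t in (0:ℝ)..u, (1 - 2 * (u - t)) ^ 2 :=
    intervalIntegral.integral_congr fun t ht => by
      rw [uIcc_of_le hu.1] at ht
      rw [abs_of_nonneg (sub_nonneg.2 ht.2)]
  have hright : ∫ t in u..1, (1 - 2 * |u - t|) ^ 2 = ∫ t in u..1, (1 - 2 * (t - u)) ^ 2 :=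
    intervalIntegral.integral_congr fun t ht => by
      rw [uIcc_of_le hu.2] at ht
      rw [abs_sub_comm, abs_of_nonneg (sub_nonneg.2 ht.1)]
  rw [integral_Icc_eq_integral_Ioc, ← intervalIntegral.integral_of_le zero_le_one,
    ← intervalIntegral.integral_add_adjacent_intervals (hcont.intervalIntegrable 0 u)
      (hcont.intervalIntegrable u 1), hleft, hright,
    intervalIntegral.integral_comp_sub_left (fun s => (1 - 2 * s) ^ 2),
    intervalIntegral.integral_comp_sub_right (fun s => (1 - 2 * s) ^ 2), sub_self, sub_zero,
    integral_one_sub_two_mul_sq, integral_one_sub_two_mul_sq]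
  ring

lemma Monotone.exists_preimage_Iic_eq_Iic {F : ℝ → ℝ} (hF : Monotone F) (hc : Continuous F)
    {t : ℝ} (hne : (F ⁻¹' Iic t).Nonempty) (hlt : ∃ b, t < F b) :
    ∃ x, F ⁻¹' Iic t = Iic x ∧ F x = t := by
  obtain ⟨b, hb⟩ := hlt
  have hbdd : BddAbove (F ⁻¹' Iic t) :=
    ⟨b, fun y hy => le_of_lt (hF.reflect_lt (lt_of_le_of_lt hy hb))⟩
  have hmem : sSup (F ⁻¹' Iic t) ∈ F ⁻¹' Iic t :=
    (isClosed_Iic.preimage hc).csSup_mem hne hbdd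
  refine ⟨sSup (F ⁻¹' Iic t), ?_, le_antisymm hmem (not_lt.1 fun hlt => ?_)⟩
  · exact Subset.antisymm (fun y hy => le_csSup hbdd hy) fun y hy => (hF hy).trans hmem
  · obtain ⟨y, hy, hFy⟩ := ((hc.tendsto _).eventually (gt_mem_nhds hlt)).exists_gt
    exact hy.not_ge (le_csSup hbdd (le_of_lt hFy))

lemma Real.measurable_sign : Measurable Real.sign := by
  unfold Real.sign
  exact Measurable.ite measurableSet_Iio measurable_const
    (Measurable.ite measurableSet_Ioi measurable_const measurable_const)

namespace ProbabilityTheory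

section ProbabilityIntegralTransform

variable {ν : Measure ℝ} [IsProbabilityMeasure ν]

lemma measure_preimage_cdf_Iic (hc : Continuous (cdf ν)) {t : ℝ} (ht0 : 0 ≤ t) (ht1 : t < 1) :
    ν (cdf ν ⁻¹' Iic t) = ENNReal.ofReal t := by
  by_cases hne : (cdf ν ⁻¹' Iic t).Nonempty
  · obtain ⟨x, hx, hFx⟩ := monotone_cdf ν |>.exists_preimage_Iic_eq_Iic hc hne
      ((tendsto_cdf_atTop ν).eventually (lt_mem_nhds ht1)).exists
    rw [hx, ← ofReal_cdf, hFx]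
  · have ht : t ≤ 0 := ge_of_tendsto (tendsto_cdf_atBot ν) <| Eventually.of_forall fun y =>
      le_of_lt (not_le.1 fun hy => hne ⟨y, hy⟩)
    rw [not_nonempty_iff_eq_empty.1 hne, le_antisymm ht ht0, measure_empty, ENNReal.ofReal_zero]

lemma map_cdf_eq_volume_restrict_Icc (hc : Continuous (cdf ν)) :
    ν.map (cdf ν) = volume.restrict (Icc 0 1) := by
  refine Measure.ext_of_Iic _ _ fun t => ?_
  rw [Measure.map_apply hc.measurable measurableSet_Iic, Measure.restrict_apply measurableSet_Iic]
  rcases lt_or_ge t 0 with ht0 | ht0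
  · have hpre : cdf ν ⁻¹' Iic t = ∅ :=
      eq_empty_of_forall_notMem fun y hy => (cdf_nonneg ν y).not_gt (lt_of_le_of_lt hy ht0)
    have hint : Iic t ∩ Icc (0:ℝ) 1 = ∅ :=
      eq_empty_of_forall_notMem fun y hy => ht0.not_ge (hy.2.1.trans hy.1)
    rw [hpre, hint, measure_empty, measure_empty]
  rcases lt_or_ge t 1 with ht1 | ht1
  · have hint : Iic t ∩ Icc (0:ℝ) 1 = Icc 0 t := by
      ext y
      simp only [mem_inter_iff, mem_Iic, mem_Icc]
      exact ⟨fun h => ⟨h.2.1, h.1⟩, fun h => ⟨h.2, h.1, h.2.trans ht1.le⟩⟩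
    rw [measure_preimage_cdf_Iic hc ht0 ht1, hint, Real.volume_Icc, sub_zero]
  · have hpre : cdf ν ⁻¹' Iic t = univ := eq_univ_of_forall fun y => (cdf_le_one ν y).trans ht1
    have hint : Iic t ∩ Icc (0:ℝ) 1 = Icc 0 1 :=
      inter_eq_self_of_subset_right fun y hy => hy.2.trans ht1
    rw [hpre, hint, measure_univ, Real.volume_Icc, sub_zero, ENNReal.ofReal_one]

lemma measure_preimage_cdf_singleton (hc : Continuous (cdf ν)) (u : ℝ) :
    ν (cdf ν ⁻¹' {u}) = 0 := by
  rw [← Measure.map_apply hc.measurable (measurableSet_singleton u),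
    map_cdf_eq_volume_restrict_Icc hc]
  exact measure_singleton u

end ProbabilityIntegralTransform

section Independence

variable {Ω β γ E : Type*} {mΩ : MeasurableSpace Ω} {μ : Measure Ω} [IsFiniteMeasure μ]
  {mβ : MeasurableSpace β} [MeasurableSpace γ] [StandardBorelSpace γ] [Nonempty γ]
  [NormedAddCommGroup E] [NormedSpace ℝ E] [CompleteSpace E] {X : Ω → β} {Y : Ω → γ}

lemma IndepFun.condDistrib_ae_eq_const (hXY : IndepFun X Y μ) (hX : AEMeasurable X μ)
    (hY : AEMeasurable Y μ) : condDistrib Y X μ =ᵐ[μ.map X] Kernel.const β (μ.map Y) :=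
  condDistrib_ae_eq_of_measure_eq_compProd X hY <| by
    rw [Measure.compProd_const, ← (indepFun_iff_map_prod_eq_prod_map_map hX hY).1 hXY]

lemma IndepFun.condExp_comp_prodMk_ae_eq (hXY : IndepFun X Y μ) (hX : Measurable X)
    (hY : AEMeasurable Y μ) {f : β × γ → E} (hf : Integrable f (μ.map fun a => (X a, Y a))) :
    μ[fun a => f (X a, Y a) | mβ.comap X] =ᵐ[μ] fun a => ∫ y, f (X a, y) ∂(μ.map Y) := by
  filter_upwards [condExp_prod_ae_eq_integral_condDistrib' hX hY hf,
    ae_of_ae_map hX.aemeasurable (hXY.condDistrib_ae_eq_const hX.aemeasurable hY)] with a h1 h2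
  rw [h1, h2, Kernel.const_apply]

end Independence

end ProbabilityTheory

/-- The paper's `v̄_{(ij)} = v_{(ij)} - (v_{(i·)} - v_{(j·)})` as a function of
`(w_i, w_j) = (x, y)`. -/
noncomputable def hoeffdingResidual (F : ℝ → ℝ) (x y : ℝ) : ℝ :=
  Real.sign (x - y) - ((2 * F x - 1) - (2 * F y - 1))

lemma hoeffdingResidual_sq_comm (F : ℝ → ℝ) (x y : ℝ) :
    hoeffdingResidual F y x ^ 2 = hoeffdingResidual F x y ^ 2 := by
  rw [hoeffdingResidual, hoeffdingResidual, ← neg_sub x y, Real.sign_neg]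
  ring

lemma hoeffdingResidual_sq_le {F : ℝ → ℝ} (hF : ∀ x, F x ∈ Icc 0 1) (x y : ℝ) :
    hoeffdingResidual F x y ^ 2 ≤ 9 := by
  obtain ⟨hx0, hx1⟩ := hF x
  obtain ⟨hy0, hy1⟩ := hF y
  obtain ⟨hs0, hs1⟩ : Real.sign (x - y) ∈ Icc (-1) 1 := by
    rcases Real.sign_apply_eq (x - y) with h | h | h <;> rw [h] <;> norm_num
  calc hoeffdingResidual F x y ^ 2 ≤ 3 ^ 2 := by
        rw [hoeffdingResidual]; exact sq_le_sq' (by linarith) (by linarith)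
    _ = 9 := by norm_num

lemma hoeffdingResidual_sq_of_ne {F : ℝ → ℝ} (hF : Monotone F) {x y : ℝ} (h : F x ≠ F y) :
    hoeffdingResidual F x y ^ 2 = (1 - 2 * |F x - F y|) ^ 2 := by
  rw [hoeffdingResidual]
  rcases h.lt_or_gt with h | h
  · rw [Real.sign_of_neg (sub_neg.2 (hF.reflect_lt h)), abs_of_neg (sub_neg.2 h)]
    ring
  · rw [Real.sign_of_pos (sub_pos.2 (hF.reflect_lt h)), abs_of_pos (sub_pos.2 h)]
    ring

lemma integrable_hoeffdingResidual_sq {F : ℝ → ℝ} (hFm : Measurable F) (hF : ∀ x, F x ∈ Icc 0 1)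
    (ρ : Measure (ℝ × ℝ)) [IsFiniteMeasure ρ] :
    Integrable (fun p => hoeffdingResidual F p.1 p.2 ^ 2) ρ := by
  refine Integrable.of_bound ?_ 9 (ae_of_all _ fun p => ?_)
  · refine Measurable.aestronglyMeasurable ?_
    unfold hoeffdingResidual
    exact ((Real.measurable_sign.comp (measurable_fst.sub measurable_snd)).sub
      (by fun_prop)).pow_const 2
  · rw [Real.norm_of_nonneg (sq_nonneg _)]
    exact hoeffdingResidual_sq_le hF p.1 p.2

lemma integral_hoeffdingResidual_cdf_sq {ν : Measure ℝ} [IsProbabilityMeasure ν]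
    (hc : Continuous (cdf ν)) (x : ℝ) :
    ∫ y, hoeffdingResidual (cdf ν) x y ^ 2 ∂ν = 1 / 3 := by
  have hne : ∀ᵐ y ∂ν, cdf ν x ≠ cdf ν y :=
    measure_eq_zero_iff_ae_notMem.1 (measure_preimage_cdf_singleton hc (cdf ν x)) |>.mono
      fun y hy => Ne.symm hy
  rw [integral_congr_ae (hne.mono fun y => hoeffdingResidual_sq_of_ne (monotone_cdf ν)),
    ← integral_map hc.measurable.aemeasurable (by fun_prop : Continuous fun t =>
      (1 - 2 * |cdf ν x - t|) ^ 2).aestronglyMeasurable, map_cdf_eq_volume_restrict_Icc hc,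
    integral_Icc_one_sub_two_mul_abs_sub_sq ⟨cdf_nonneg ν x, cdf_le_one ν x⟩]

/-- The nonlinear part of the Hoeffding decomposition has conditional second moment
`E[v̄₍ᵢⱼ₎² | wᵢ] = 1/3` and `E[v̄₍ᵢⱼ₎² | wⱼ] = 1/3` almost surely. -/
theorem statement3 {Ω : Type*} [MeasurableSpace Ω] (μ : Measure Ω) [IsProbabilityMeasure μ]
    (wi wj : Ω → ℝ) (hi : Measurable wi) (hj : Measurable wj)
    (hindep : IndepFun wi wj μ)
    (hid : Measure.map wi μ = Measure.map wj μ)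
    (F : ℝ → ℝ) (hF : ∀ x, F x = (μ {ω | wi ω ≤ x}).toReal)
    (hFc : Continuous F)
    (vbar : Ω → ℝ)
    (hvbar : ∀ ω, vbar ω =
      Real.sign (wi ω - wj ω) - ((2 * F (wi ω) - 1) - (2 * F (wj ω) - 1))) :
    (μ[(fun ω => (vbar ω) ^ 2) | MeasurableSpace.comap wi inferInstance]
        =ᵐ[μ] fun _ => 1 / 3)
    ∧ (μ[(fun ω => (vbar ω) ^ 2) | MeasurableSpace.comap wj inferInstance]
        =ᵐ[μ] fun _ => 1 / 3) := by
  set ν := μ.map wi with hν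
  have : IsProbabilityMeasure ν := Measure.isProbabilityMeasure_map hi.aemeasurable
  obtain rfl : F = cdf ν := funext fun x => by
    rw [hF, cdf_eq_real, measureReal_def, hν, Measure.map_apply hi measurableSet_Iic]; rfl
  have hF01 : ∀ x, cdf ν x ∈ Icc 0 1 := fun x => ⟨cdf_nonneg ν x, cdf_le_one ν x⟩
  have hvbar_sq : (fun ω => vbar ω ^ 2) = fun ω => hoeffdingResidual (cdf ν) (wi ω) (wj ω) ^ 2 :=
    funext fun ω => by rw [hvbar]; rfl
  constructor
  · rw [hvbar_sq]
    refine (hindep.condExp_comp_prodMk_ae_eq hi hj.aemeasurable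
      (f := fun p => hoeffdingResidual (cdf ν) p.1 p.2 ^ 2)
      (integrable_hoeffdingResidual_sq hFc.measurable hF01 _)).trans (ae_of_all _ fun ω => ?_)
    rw [← hid]
    exact integral_hoeffdingResidual_cdf_sq hFc (wi ω)
  · simp_rw [hvbar_sq, ← hoeffdingResidual_sq_comm (cdf ν) (wi _)]
    exact (hindep.symm.condExp_comp_prodMk_ae_eq hj hi.aemeasurable
      (f := fun p => hoeffdingResidual (cdf ν) p.1 p.2 ^ 2)
      (integrable_hoeffdingResidual_sq hFc.measurable hF01 _)).trans
      (ae_of_all _ fun ω => integral_hoeffdingResidual_cdf_sq hFc (wj ω))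
end

section
/- The matrix Γ with entries Γ_{(ij),(st)} = (1/3)(δ_{is} + δ_{jt} - δ_{it} - δ_{js}), indexed by pairs 1 ≤ i < j ≤ n and 1 ≤ s < t ≤ n, satisfies Γ² = (n/3)·Γ. -/
lemma full_sum7 (n : ℕ) (u v : Fin n → ℝ) (hu : ∑ k, u k = 0) (hv : ∑ k, v k = 0) :
    ∑ q : Fin n × Fin n, (u q.1 - u q.2) * (v q.1 - v q.2) = 2 * n * ∑ k, u k * v k := by
  rw [Fintype.sum_prod_type]
  simp only [sub_mul, mul_sub, Finset.sum_sub_distrib, ← Finset.mul_sum, ← Finset.sum_mul,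
    hu, hv, Finset.sum_const, Finset.card_univ, Fintype.card_fin, nsmul_eq_mul, mul_zero, zero_mul]
  have : ∑ x, u x * ((n:ℝ) * v x) = (n:ℝ) * ∑ x, u x * v x := by
    rw [Finset.mul_sum]; exact Finset.sum_congr rfl fun x _ => by ring
  rw [this]; ring

lemma half_sum7 (n : ℕ) (u v : Fin n → ℝ) (hu : ∑ k, u k = 0) (hv : ∑ k, v k = 0) :
    ∑ q : {q : Fin n × Fin n // q.1 < q.2}, (u q.1.1 - u q.1.2) * (v q.1.1 - v q.1.2)
      = n * ∑ k, u k * v k := by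
  set F : Fin n × Fin n → ℝ := fun q => (u q.1 - u q.2) * (v q.1 - v q.2) with hF
  have h1 : ∑ q : {q : Fin n × Fin n // q.1 < q.2}, F q.1
      = ∑ q ∈ Finset.univ.filter (fun q : Fin n × Fin n => q.1 < q.2), F q :=
    (Finset.sum_subtype _ (by simp) F).symm
  have h2 : ∑ q ∈ Finset.univ.filter (fun q : Fin n × Fin n => ¬ q.1 < q.2), F q
      = ∑ q ∈ Finset.univ.filter (fun q : Fin n × Fin n => q.2 < q.1), F q := by
    refine (Finset.sum_subset ?_ ?_).symm
    · intro q hq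
      simp only [Finset.mem_filter, Finset.mem_univ, true_and] at hq ⊢
      exact not_lt.mpr hq.le
    · intro q hq hq'
      simp only [Finset.mem_filter, Finset.mem_univ, true_and, not_lt] at hq hq'
      have : q.1 = q.2 := le_antisymm hq' hq
      simp [hF, this]
  have h3 : ∑ q ∈ Finset.univ.filter (fun q : Fin n × Fin n => q.2 < q.1), F q
      = ∑ q ∈ Finset.univ.filter (fun q : Fin n × Fin n => q.1 < q.2), F q := by
    refine Finset.sum_equiv (Equiv.prodComm (Fin n) (Fin n)) ?_ ?_
    · intro q; simp [Equiv.prodComm]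
    · intro q hq; simp [hF]; ring
  have h4 := Finset.sum_filter_add_sum_filter_not Finset.univ
      (fun q : Fin n × Fin n => q.1 < q.2) F
  have h5 := full_sum7 n u v hu hv
  have : (2:ℝ) * ∑ q ∈ Finset.univ.filter (fun q : Fin n × Fin n => q.1 < q.2), F q
      = 2 * n * ∑ k, u k * v k := by
    rw [← h5, ← h4, h2, h3]; ring
  rw [h1]; linarith

/-- The matrix `Γ` with entries `Γ_{(ij),(st)} = (1/3)(δ_{is} + δ_{jt} - δ_{it} - δ_{js})`,
indexed by pairs `i < j`, satisfies `Γ² = (n/3)·Γ`. -/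
theorem statement7 (n : ℕ) (hn : 2 ≤ n)
    (Γ : Matrix {q : Fin n × Fin n // q.1 < q.2} {q : Fin n × Fin n // q.1 < q.2} ℝ)
    (hΓ : ∀ a b, Γ a b = (1 / 3) *
      ((if a.1.1 = b.1.1 then (1 : ℝ) else 0) + (if a.1.2 = b.1.2 then 1 else 0)
        - (if a.1.1 = b.1.2 then 1 else 0) - (if a.1.2 = b.1.1 then 1 else 0))) :
    Γ * Γ = ((n : ℝ) / 3) • Γ := by
  ext a b
  rw [Matrix.mul_apply, Matrix.smul_apply, smul_eq_mul]
  set u : Fin n → ℝ := fun k => (if a.1.1 = k then (1:ℝ) else 0) - (if a.1.2 = k then 1 else 0)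
    with hu'
  set v : Fin n → ℝ := fun k => (if k = b.1.1 then (1:ℝ) else 0) - (if k = b.1.2 then 1 else 0)
    with hv'
  have hu : ∑ k, u k = 0 := by
    simp [hu', Finset.sum_sub_distrib, Finset.sum_ite_eq]
  have hv : ∑ k, v k = 0 := by
    simp [hv', Finset.sum_sub_distrib, Finset.sum_ite_eq']
  have hA : ∀ c, Γ a c = 1/3 * (u c.1.1 - u c.1.2) := by
    intro c; rw [hΓ]; simp only [hu']; ring
  have hB : ∀ c, Γ c b = 1/3 * (v c.1.1 - v c.1.2) := by
    intro c; rw [hΓ]; simp only [hv']; ring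
  have hab : Γ a b = 1/3 * ∑ k, u k * v k := by
    rw [hΓ]
    have : ∑ k, u k * v k
        = (if a.1.1 = b.1.1 then (1:ℝ) else 0) + (if a.1.2 = b.1.2 then 1 else 0)
          - (if a.1.1 = b.1.2 then 1 else 0) - (if a.1.2 = b.1.1 then 1 else 0) := by
      simp only [hu', hv', sub_mul, mul_sub, Finset.sum_sub_distrib, ite_mul, mul_ite,
        one_mul, mul_one, zero_mul, mul_zero, Finset.sum_ite_eq, Finset.sum_ite_eq', Finset.mem_univ, if_true]
      ring
    rw [this]
  calc ∑ c, Γ a c * Γ c b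
      = ∑ c : {q : Fin n × Fin n // q.1 < q.2},
          1/9 * ((u c.1.1 - u c.1.2) * (v c.1.1 - v c.1.2)) := by
        refine Finset.sum_congr rfl fun c _ => ?_
        rw [hA, hB]; ring
    _ = 1/9 * ((n:ℝ) * ∑ k, u k * v k) := by
        rw [← Finset.mul_sum, half_sum7 n u v hu hv]
    _ = (n:ℝ)/3 * Γ a b := by rw [hab]; ring
end

section
/- For a Hermitian matrix D, a vector α, and any z = E + iη with η > 0, one has |Tr((D ± αα* − z)⁻¹) − Tr((D − z)⁻¹)| ≤ 1/η. More generally, for a finite-rank Hermitian perturbation R and a matrix Q, |Tr(Q(D + R − z)⁻¹) − Tr(Q(D − z)⁻¹)| ≤ rank(R)·‖Q‖/η. -/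
open Matrix

/-! By Sherman–Morrison, a rank-one perturbation `t v v*` of `D` changes `Tr(Q G)`, where
`G = (D - z)⁻¹`, by `-t ⟪G* v, Q G v⟫ / (1 + t ⟪v, G v⟫)`. Since `D` is Hermitian,
`Im ⟪v, G v⟫ = η ‖G v‖² = η ‖G* v‖²`, so the denominator has modulus at least `|t| η ‖G v‖²`,
while Cauchy–Schwarz bounds the numerator by `|t| ‖Q‖ ‖G v‖²`: each rank-one step moves the
trace by at most `‖Q‖ / η`. By the spectral theorem a Hermitian `R` is a sum of `rank R` real
multiples of rank-one projections, and the bound telescopes. -/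

theorem Complex.abs_mul_im_le_norm_one_add_ofReal_mul (t : ℝ) (c : ℂ) :
    |t| * c.im ≤ ‖1 + t * c‖ := by
  calc |t| * c.im ≤ |(1 + t * c).im| := by
        rw [add_im, one_im, zero_add, im_ofReal_mul, abs_mul]
        exact mul_le_mul_of_nonneg_left (le_abs_self _) (abs_nonneg _)
    _ ≤ ‖1 + t * c‖ := abs_im_le_norm _

theorem Complex.norm_ofReal_mul_div_one_add_ofReal_mul_le {t a η K : ℝ} (ht : t ≠ 0)
    (ha : 0 < a) (hη : 0 < η) {b c : ℂ} (hb : ‖b‖ ≤ K * a) (hc : c.im = η * a) :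
    ‖t * b / (1 + t * c)‖ ≤ K / η := by
  have hf : |t| * (η * a) ≤ ‖1 + t * c‖ := hc ▸ abs_mul_im_le_norm_one_add_ofReal_mul t c
  have hpos : 0 < |t| * (η * a) := by positivity
  rw [norm_div, norm_mul, norm_real, Real.norm_eq_abs]
  calc |t| * ‖b‖ / ‖1 + t * c‖ ≤ |t| * (K * a) / (|t| * (η * a)) := by
        gcongr
        exact mul_nonneg (abs_nonneg t) ((norm_nonneg b).trans hb)
    _ = K / η := by field_simp

theorem Finset.norm_apply_add_sum_sub_le_card_mul {M E ι : Type*} [AddCommMonoid M]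
    [SeminormedAddGroup E] (S : AddSubmonoid M) (F : M → E) {C : ℝ} (s : Finset ι)
    (P : ι → M) (hP : ∀ i ∈ s, P i ∈ S) (hF : ∀ x ∈ S, ∀ i ∈ s, ‖F (x + P i) - F x‖ ≤ C)
    {x : M} (hx : x ∈ S) :
    ‖F (x + ∑ i ∈ s, P i) - F x‖ ≤ s.card * C := by
  classical
  induction s using Finset.induction_on with
  | empty => simp
  | insert a s ha ih =>
    have hmem : x + ∑ i ∈ s, P i ∈ S :=
      S.add_mem hx (S.sum_mem fun i hi => hP i (Finset.mem_insert_of_mem hi))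
    rw [Finset.sum_insert ha, add_comm (P a), ← add_assoc,
      Finset.card_insert_of_notMem ha, Nat.cast_succ, add_one_mul]
    calc ‖F (x + ∑ i ∈ s, P i + P a) - F x‖
        ≤ ‖F (x + ∑ i ∈ s, P i + P a) - F (x + ∑ i ∈ s, P i)‖ + ‖F (x + ∑ i ∈ s, P i) - F x‖ :=
          norm_sub_le_norm_sub_add_norm_sub _ _ _
      _ ≤ C + s.card * C := by
          gcongr
          · exact hF _ hmem a (Finset.mem_insert_self a s)
          · exact ih (fun i hi => hP i (Finset.mem_insert_of_mem hi))
              (fun y hy i hi => hF y hy i (Finset.mem_insert_of_mem hi))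
      _ = s.card * C + C := add_comm _ _

namespace Matrix

variable {n : Type*} [Fintype n] [DecidableEq n]

theorem inv_add_vecMulVec {K : Type*} [Field K] {A : Matrix n n K} (hA : IsUnit A)
    (v w : n → K) (hf : 1 + w ⬝ᵥ (A⁻¹ *ᵥ v) ≠ 0) :
    (A + vecMulVec v w)⁻¹ =
      A⁻¹ - (1 + w ⬝ᵥ (A⁻¹ *ᵥ v))⁻¹ • vecMulVec (A⁻¹ *ᵥ v) (w ᵥ* A⁻¹) := by
  have hA' := (isUnit_iff_isUnit_det A).mp hA
  apply inv_eq_right_inv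
  rw [Matrix.add_mul, Matrix.mul_sub, Matrix.mul_sub, mul_nonsing_inv _ hA', Matrix.mul_smul,
    Matrix.mul_smul, mul_vecMulVec, mulVec_mulVec, mul_nonsing_inv _ hA', one_mulVec,
    vecMulVec_mul, vecMulVec_mul_vecMulVec, vecMulVec_smul, smul_smul]
  linear_combination (norm := module) -(inv_mul_cancel₀ hf) • vecMulVec v (w ᵥ* A⁻¹)

theorem trace_mul_inv_add_vecMulVec_sub {K : Type*} [Field K] {A : Matrix n n K} (hA : IsUnit A)
    (v w : n → K) (hf : 1 + w ⬝ᵥ (A⁻¹ *ᵥ v) ≠ 0) (Q : Matrix n n K) :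
    (Q * (A + vecMulVec v w)⁻¹).trace - (Q * A⁻¹).trace =
      -((w ᵥ* A⁻¹) ⬝ᵥ (Q *ᵥ (A⁻¹ *ᵥ v))) / (1 + w ⬝ᵥ (A⁻¹ *ᵥ v)) := by
  rw [inv_add_vecMulVec hA v w hf, Matrix.mul_sub, trace_sub, sub_sub_cancel_left,
    Matrix.mul_smul, trace_smul, mul_vecMulVec, trace_vecMulVec, dotProduct_comm (Q *ᵥ _),
    smul_eq_mul, neg_div, inv_mul_eq_div]

theorem IsHermitian.im_star_dotProduct_sub_smul_one_mulVec {D : Matrix n n ℂ}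
    (hD : D.IsHermitian) (z : ℂ) (x : n → ℂ) :
    (star x ⬝ᵥ ((D - z • 1) *ᵥ x)).im = -z.im * ‖WithLp.toLp 2 x‖ ^ 2 := by
  have hx : star x ⬝ᵥ x = ((‖WithLp.toLp 2 x‖ ^ 2 : ℝ) : ℂ) := by
    rw [dotProduct_comm, ← EuclideanSpace.inner_toLp_toLp, inner_self_eq_norm_sq_to_K]
    push_cast; rfl
  have hreal := hD.im_star_dotProduct_mulVec_self x
  rw [RCLike.im_to_complex] at hreal
  rw [sub_mulVec, smul_mulVec, one_mulVec, dotProduct_sub, dotProduct_smul, hx, smul_eq_mul,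
    Complex.sub_im, Complex.mul_im, Complex.ofReal_im, Complex.ofReal_re, hreal]
  ring

theorem IsHermitian.isUnit_sub_smul_one {D : Matrix n n ℂ} (hD : D.IsHermitian) {z : ℂ}
    (hz : z.im ≠ 0) : IsUnit (D - z • 1) := by
  rw [isUnit_iff_isUnit_det, isUnit_iff_ne_zero, Ne, ← exists_mulVec_eq_zero_iff]
  rintro ⟨x, hx0, hx⟩
  have him := hD.im_star_dotProduct_sub_smul_one_mulVec z x
  rw [hx, dotProduct_zero, Complex.zero_im, eq_comm, mul_eq_zero, neg_eq_zero] at him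
  obtain h | h := him
  · exact hz h
  · exact hx0 (by simpa using h)

theorem IsHermitian.im_star_dotProduct_inv_sub_smul_one_mulVec {D : Matrix n n ℂ}
    (hD : D.IsHermitian) {z : ℂ} (hz : z.im ≠ 0) (v : n → ℂ) :
    (star v ⬝ᵥ ((D - z • 1)⁻¹ *ᵥ v)).im = z.im * ‖WithLp.toLp 2 ((D - z • 1)⁻¹ *ᵥ v)‖ ^ 2 := by
  set u := (D - z • 1)⁻¹ *ᵥ v
  have hv : v = (D - z • 1) *ᵥ u := by
    rw [mulVec_mulVec, mul_nonsing_inv _ ((isUnit_iff_isUnit_det _).mp (hD.isUnit_sub_smul_one hz)),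
      one_mulVec]
  have hconj : star v ⬝ᵥ u = star (star u ⬝ᵥ ((D - z • 1) *ᵥ u)) := by
    rw [star_dotProduct, ← hv]
  rw [hconj, Complex.star_def, Complex.conj_im, hD.im_star_dotProduct_sub_smul_one_mulVec]
  ring

theorem IsHermitian.norm_toLp_conjTranspose_inv_sub_smul_one_mulVec {D : Matrix n n ℂ}
    (hD : D.IsHermitian) {z : ℂ} (hz : z.im ≠ 0) (v : n → ℂ) :
    ‖WithLp.toLp 2 ((D - z • 1)⁻¹ᴴ *ᵥ v)‖ = ‖WithLp.toLp 2 ((D - z • 1)⁻¹ *ᵥ v)‖ := by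
  have hH : (D - z • 1)⁻¹ᴴ = (D - starRingEnd ℂ z • 1)⁻¹ := by
    rw [conjTranspose_nonsing_inv, conjTranspose_sub, hD.eq, conjTranspose_smul, conjTranspose_one,
      Complex.star_def]
  have hconj : star v ⬝ᵥ ((D - z • 1)⁻¹ *ᵥ v) = star (star v ⬝ᵥ ((D - z • 1)⁻¹ᴴ *ᵥ v)) := by
    rw [star_dotProduct, star_mulVec, ← dotProduct_mulVec]
  have hz' : (starRingEnd ℂ z).im ≠ 0 := by simpa using hz
  have him := congrArg Complex.im hconj
  rw [hD.im_star_dotProduct_inv_sub_smul_one_mulVec hz, Complex.star_def, Complex.conj_im, hH,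
    hD.im_star_dotProduct_inv_sub_smul_one_mulVec hz', Complex.conj_im, neg_mul, neg_neg,
    mul_right_inj' hz] at him
  rw [← hH] at him
  exact (pow_left_inj₀ (norm_nonneg _) (norm_nonneg _) two_ne_zero).mp him.symm

theorem norm_star_dotProduct_mulVec_le {𝕜 : Type*} [RCLike 𝕜] (Q : Matrix n n 𝕜) (x y : n → 𝕜) :
    ‖star x ⬝ᵥ (Q *ᵥ y)‖ ≤
      ‖toEuclideanCLM (𝕜 := 𝕜) Q‖ * (‖WithLp.toLp 2 x‖ * ‖WithLp.toLp 2 y‖) := by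
  have h : star x ⬝ᵥ (Q *ᵥ y) =
      inner 𝕜 (WithLp.toLp 2 x) (toEuclideanCLM (𝕜 := 𝕜) Q (WithLp.toLp 2 y)) := by
    rw [dotProduct_comm]; rfl
  rw [h, mul_left_comm]
  exact (norm_inner_le_norm _ _).trans
    (mul_le_mul_of_nonneg_left ((toEuclideanCLM (𝕜 := 𝕜) Q).le_opNorm _) (norm_nonneg _))

theorem IsHermitian.norm_trace_mul_inv_add_smul_vecMulVec_sub_le {D : Matrix n n ℂ}
    (hD : D.IsHermitian) {z : ℂ} (hz : 0 < z.im) (Q : Matrix n n ℂ) (t : ℝ) (v : n → ℂ) :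
    ‖(Q * (D + (t : ℂ) • vecMulVec v (star v) - z • 1)⁻¹).trace - (Q * (D - z • 1)⁻¹).trace‖
      ≤ ‖toEuclideanCLM (𝕜 := ℂ) Q‖ / z.im := by
  rcases eq_or_ne t 0 with rfl | ht
  · simp only [Complex.ofReal_zero, zero_smul, add_zero, sub_self, norm_zero]
    positivity
  rcases eq_or_ne v 0 with rfl | hv
  · simp only [zero_vecMulVec, smul_zero, add_zero, sub_self, norm_zero]
    positivity
  set A := D - z • 1
  have hA : IsUnit A := hD.isUnit_sub_smul_one hz.ne'
  set u := A⁻¹ *ᵥ v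
  set w := A⁻¹ᴴ *ᵥ v
  set c := star v ⬝ᵥ u
  have hcu : c.im = z.im * ‖WithLp.toLp 2 u‖ ^ 2 :=
    hD.im_star_dotProduct_inv_sub_smul_one_mulVec hz.ne' v
  have hwu : ‖WithLp.toLp 2 w‖ = ‖WithLp.toLp 2 u‖ :=
    hD.norm_toLp_conjTranspose_inv_sub_smul_one_mulVec hz.ne' v
  have hu : 0 < ‖WithLp.toLp 2 u‖ := by
    have hu0 : u ≠ 0 := fun h => hv <|
      mulVec_injective_iff_isUnit.mpr (isUnit_nonsing_inv_iff.mpr hA) (h.trans (mulVec_zero _).symm)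
    simpa using hu0
  have hdot : ((t : ℂ) • star v) ⬝ᵥ u = t * c := by rw [smul_dotProduct, smul_eq_mul]
  have hf : 1 + ((t : ℂ) • star v) ⬝ᵥ u ≠ 0 := by
    rw [hdot, ← norm_pos_iff]
    refine lt_of_lt_of_le ?_ (Complex.abs_mul_im_le_norm_one_add_ofReal_mul t c)
    rw [hcu]; positivity
  have hvec : ((t : ℂ) • star v) ᵥ* A⁻¹ = (t : ℂ) • star w := by
    rw [smul_vecMul, star_mulVec, conjTranspose_conjTranspose]
  rw [show D + (t : ℂ) • vecMulVec v (star v) - z • 1 = A + vecMulVec v ((t : ℂ) • star v) by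
      rw [vecMulVec_smul, add_sub_right_comm],
    trace_mul_inv_add_vecMulVec_sub hA v _ hf Q, hvec, hdot, smul_dotProduct, smul_eq_mul,
    neg_div, norm_neg]
  refine Complex.norm_ofReal_mul_div_one_add_ofReal_mul_le ht (pow_pos hu 2) hz ?_ hcu
  calc ‖star w ⬝ᵥ (Q *ᵥ u)‖
      ≤ ‖toEuclideanCLM (𝕜 := ℂ) Q‖ * (‖WithLp.toLp 2 w‖ * ‖WithLp.toLp 2 u‖) :=
        norm_star_dotProduct_mulVec_le Q w u
    _ = ‖toEuclideanCLM (𝕜 := ℂ) Q‖ * ‖WithLp.toLp 2 u‖ ^ 2 := by rw [hwu, sq]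

theorem IsHermitian.sum_eigenvalues_smul_vecMulVec {𝕜 : Type*} [RCLike 𝕜] {R : Matrix n n 𝕜}
    (hR : R.IsHermitian) :
    ∑ i, (hR.eigenvalues i : 𝕜) •
      vecMulVec ⇑(hR.eigenvectorBasis i) (star ⇑(hR.eigenvectorBasis i)) = R := by
  conv_rhs => rw [hR.spectral_theorem, Unitary.conjStarAlgAut_apply]
  ext a b
  rw [Matrix.sum_apply, mul_apply]
  refine Finset.sum_congr rfl fun j _ => ?_
  simp only [Matrix.smul_apply, vecMulVec_apply, Pi.star_apply, mul_diagonal, star_apply,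
    eigenvectorUnitary_apply, Function.comp_apply, smul_eq_mul]
  ring

theorem IsHermitian.norm_trace_mul_inv_add_sub_le {D R : Matrix n n ℂ} (hD : D.IsHermitian)
    (hR : R.IsHermitian) {z : ℂ} (hz : 0 < z.im) (Q : Matrix n n ℂ) :
    ‖(Q * (D + R - z • 1)⁻¹).trace - (Q * (D - z • 1)⁻¹).trace‖
      ≤ R.rank * ‖toEuclideanCLM (𝕜 := ℂ) Q‖ / z.im := by
  set P : n → Matrix n n ℂ := fun i => (hR.eigenvalues i : ℂ) •
    vecMulVec ⇑(hR.eigenvectorBasis i) (star ⇑(hR.eigenvectorBasis i))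
  have hR_sum : R = ∑ i ∈ Finset.univ.filter (hR.eigenvalues · ≠ 0), P i := by
    rw [Finset.sum_filter_of_ne (p := (hR.eigenvalues · ≠ 0))
      fun i _ hPi h => hPi (by simp [P, h])]
    exact hR.sum_eigenvalues_smul_vecMulVec.symm
  rw [hR.rank_eq_card_non_zero_eigs, Fintype.card_subtype, mul_div_assoc]
  conv_lhs => rw [hR_sum]
  refine Finset.norm_apply_add_sum_sub_le_card_mul (selfAdjoint (Matrix n n ℂ)).toAddSubmonoid
    (fun M => (Q * (M - z • 1)⁻¹).trace) _ P (fun i _ => ?_) (fun M hM i _ => ?_) hD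
  · have hvv (v : n → ℂ) : (vecMulVec v (star v)).IsHermitian := by
      rw [IsHermitian, conjTranspose_vecMulVec, star_star]
    exact (hvv _).smul (isSelfAdjoint_iff.mpr (Complex.conj_ofReal _))
  · exact norm_trace_mul_inv_add_smul_vecMulVec_sub_le hM hz Q _ _

end Matrix

/-- Rank-one and finite-rank resolvent perturbation bounds: for Hermitian `D`, a vector `α`,
and `z = E + iη` with `η > 0`, `|Tr((D ± αα* − z)⁻¹) − Tr((D − z)⁻¹)| ≤ 1/η`; and for a
finite-rank Hermitian perturbation `R` and arbitrary `Q`,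
`|Tr(Q(D + R − z)⁻¹) − Tr(Q(D − z)⁻¹)| ≤ rank(R)·‖Q‖/η`. -/
theorem statement15 {N : ℕ} (D R Q : Matrix (Fin N) (Fin N) ℂ)
    (hD : D.IsHermitian) (hR : R.IsHermitian)
    (E η : ℝ) (hη : 0 < η) (z : ℂ) (hz : z = E + η * Complex.I)
    (α : Fin N → ℂ) :
    (‖(((D + Matrix.vecMulVec α (star α) - z • 1)⁻¹).trace
        - ((D - z • 1)⁻¹).trace)‖ ≤ 1 / η)
    ∧ (‖(((D - Matrix.vecMulVec α (star α) - z • 1)⁻¹).trace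
        - ((D - z • 1)⁻¹).trace)‖ ≤ 1 / η)
    ∧ ‖((Q * (D + R - z • 1)⁻¹).trace - (Q * (D - z • 1)⁻¹).trace)‖
        ≤ (R.rank : ℝ) * ‖Matrix.toEuclideanCLM (𝕜 := ℂ) Q‖ / η := by
  have hzη : z.im = η := by simp [hz]
  have hz_pos : 0 < z.im := hzη ▸ hη
  have hone : ‖toEuclideanCLM (𝕜 := ℂ) (1 : Matrix (Fin N) (Fin N) ℂ)‖ ≤ 1 := by
    rw [map_one]
    exact ContinuousLinearMap.norm_id_le
  have rankOne (t : ℝ) := hD.norm_trace_mul_inv_add_smul_vecMulVec_sub_le hz_pos 1 t α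
  refine ⟨?_, ?_, hzη ▸ hD.norm_trace_mul_inv_add_sub_le hR hz_pos Q⟩
  · have h := rankOne 1
    simp only [Complex.ofReal_one, one_smul, Matrix.one_mul, hzη] at h
    exact h.trans (by gcongr)
  · have h := rankOne (-1)
    simp only [Complex.ofReal_neg, Complex.ofReal_one, neg_smul, one_smul, ← sub_eq_add_neg,
      Matrix.one_mul, hzη] at h
    exact h.trans (by gcongr)
end
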